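/- arXiv:1408.5099 — 3 statements merged into one kernel-verified Lean document; each statement's English description precedes it below -/
import Mathlib

section
/- Let A be a real n×d matrix and let u ∈ ℝⁿ satisfy u_i > 0 for all i. Then there exists a diagonal matrix W ∈ ℝ^{n×n} with 0 ≤ W_{ii} ≤ 1 for all i such that: (1) τ_i(WA) ≤ u_i for every i ∈ {1,…,n}, and (2) ∑_{i : W_{ii} ≠ 1} u_i ≤ d. -/
/-!
Regularize: below `WA` stack the rows of `ε • 1`. For `ε > 0`, maximize `∑ uᵢ wᵢ` over the compact
set of weights `w ∈ [0,1]ⁿ` whose regularized leverage scores are at most `u`. Raising one weight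
never increases the scores of the other rows, and the score of row `i` is upper semicontinuous in
its own weight (at `wᵢ = 0` because the ridge rows bound it by `wᵢ² ‖aᵢ‖² / ε²`). So at a maximizer
every row with `wᵢ < 1` has score at least `uᵢ`, while the leverage scores of a matrix with `d`
columns sum to at most `d`. Finally let `ε → 0` along a convergent subsequence of maximizers:
leverage scores are lower semicontinuous, deleting the vanished ridge rows can only lower them, and
`{i | wᵢ ≠ 1}` can only shrink in the limit.
-/

open Matrix
open scoped Classical

/-- The leverage score of row `i` of `M`:
`τᵢ(M) = inf {‖x‖₂² : Mᵀx = mᵢ}` (the set is nonempty since `x = eᵢ` works). -/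
noncomputable def lev {n d : ℕ} (M : Matrix (Fin n) (Fin d) ℝ) (i : Fin n) : ℝ :=
  sInf {t : ℝ | ∃ x : Fin n → ℝ, Mᵀ *ᵥ x = M i ∧ t = ∑ j, (x j) ^ 2}

open Filter Topology Set Finset

theorem Submodule.sum_norm_sq_starProjection {ι 𝕜 E : Type*} [Fintype ι] [RCLike 𝕜]
    [NormedAddCommGroup E] [InnerProductSpace 𝕜 E] [FiniteDimensional 𝕜 E]
    (U : Submodule 𝕜 E) (f : OrthonormalBasis ι 𝕜 E) :
    ∑ i, ‖U.starProjection (f i)‖ ^ 2 = Module.finrank 𝕜 U := by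
  let b := stdOrthonormalBasis 𝕜 U
  have hcoord (i) : ‖U.starProjection (f i)‖ ^ 2 = ∑ k, ‖inner 𝕜 (f i) (b k : E)‖ ^ 2 := by
    rw [starProjection_apply, norm_coe, ← b.sum_sq_norm_inner_right]
    refine Finset.sum_congr rfl fun k _ => ?_
    rw [inner_orthogonalProjectionOnto_eq_of_mem_left, ← inner_conj_symm, RCLike.norm_conj]
  simp_rw [hcoord]
  rw [Finset.sum_comm]
  simp_rw [f.sum_sq_norm_inner_right, norm_coe, b.orthonormal.1, one_pow]
  simp

section Leverage

variable {N D : ℕ} (M : Matrix (Fin N) (Fin D) ℝ)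

theorem isLeast_lev (i : Fin N) :
    IsLeast {t : ℝ | ∃ x : Fin N → ℝ, Mᵀ *ᵥ x = M i ∧ t = ∑ j, (x j) ^ 2}
      (‖(LinearMap.ker (toLpLin 2 2 Mᵀ))ᗮ.starProjection (EuclideanSpace.single i 1)‖ ^ 2) := by
  set K := LinearMap.ker (toLpLin 2 2 Mᵀ)
  have hsingle : Mᵀ *ᵥ Pi.single i 1 = M i := by
    ext j; simp [mulVec_single]
  have hfeas (x : EuclideanSpace ℝ (Fin N)) :
      Mᵀ *ᵥ x.ofLp = M i ↔ x - EuclideanSpace.single i 1 ∈ K := by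
    rw [LinearMap.mem_ker, map_sub, sub_eq_zero, toLpLin_apply, toLpLin_apply]
    simp [hsingle]
  constructor
  · refine ⟨(Kᗮ.starProjection (EuclideanSpace.single i 1)).ofLp, ?_, ?_⟩
    · rw [hfeas, Submodule.starProjection_orthogonal_val, sub_sub_cancel_left, neg_mem_iff]
      exact K.starProjection_apply_mem _
    · exact (EuclideanSpace.real_norm_sq_eq _)
  · rintro t ⟨x, hx, rfl⟩
    rw [← EuclideanSpace.real_norm_sq_eq (WithLp.toLp 2 x)]
    have hker : WithLp.toLp 2 x - EuclideanSpace.single i 1 ∈ K := (hfeas _).1 hx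
    have hproj :
        Kᗮ.starProjection (WithLp.toLp 2 x) = Kᗮ.starProjection (EuclideanSpace.single i 1) := by
      rw [← sub_eq_zero, ← map_sub]
      exact Submodule.starProjection_orthogonal_apply_eq_zero hker
    rw [← hproj]
    gcongr
    exact Kᗮ.norm_starProjection_apply_le _

theorem lev_eq (i : Fin N) :
    lev M i = ‖(LinearMap.ker (toLpLin 2 2 Mᵀ))ᗮ.starProjection (EuclideanSpace.single i 1)‖ ^ 2 :=
  (isLeast_lev M i).csInf_eq

theorem lev_nonneg (i : Fin N) : 0 ≤ lev M i := by
  rw [lev_eq]; positivity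

theorem lev_le_sum_sq {i : Fin N} {x : Fin N → ℝ} (hx : Mᵀ *ᵥ x = M i) :
    lev M i ≤ ∑ j, x j ^ 2 :=
  lev_eq M i ▸ (isLeast_lev M i).2 ⟨x, hx, rfl⟩

theorem exists_lev_eq_sum_sq (i : Fin N) :
    ∃ x : Fin N → ℝ, Mᵀ *ᵥ x = M i ∧ lev M i = ∑ j, x j ^ 2 :=
  lev_eq M i ▸ (isLeast_lev M i).1

theorem sum_lev_le : ∑ i, lev M i ≤ D := by
  set f := toLpLin 2 2 Mᵀ
  have hlev (i : Fin N) :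
      lev M i = ‖(LinearMap.ker f)ᗮ.starProjection (EuclideanSpace.basisFun (Fin N) ℝ i)‖ ^ 2 := by
    rw [lev_eq, EuclideanSpace.basisFun_apply]
  rw [Finset.sum_congr rfl fun i _ => hlev i, Submodule.sum_norm_sq_starProjection]
  have hK := (LinearMap.ker f).finrank_add_finrank_orthogonal
  have hf := LinearMap.finrank_range_add_finrank_ker f
  have hrange : Module.finrank ℝ (LinearMap.range f) ≤ D :=
    (LinearMap.range f).finrank_le.trans_eq finrank_euclideanSpace_fin
  rw [finrank_euclideanSpace_fin] at hK hf
  exact_mod_cast (by omega : Module.finrank ℝ (LinearMap.ker f)ᗮ ≤ D)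

theorem lowerSemicontinuous_lev (i : Fin N) :
    LowerSemicontinuous fun M : Matrix (Fin N) (Fin D) ℝ => lev M i := by
  -- `Matrix` has no `SequentialSpace` instance; argue in the underlying function space.
  refine lowerSemicontinuous_iff_isClosed_preimage.2 fun c =>
    IsSeqClosed.isClosed (X := Fin N → Fin D → ℝ) ?_
  intro Ms M hMs hlim
  choose x hx hxlev using fun m => exists_lev_eq_sum_sq (Ms m) i
  have hxc (m) : ∑ j, x m j ^ 2 ≤ c := hxlev m ▸ hMs m
  have hball (m) : x m ∈ Metric.closedBall 0 √c := by
    rw [mem_closedBall_zero_iff, pi_norm_le_iff_of_nonneg (Real.sqrt_nonneg c)]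
    exact fun j => Real.abs_le_sqrt <|
      (Finset.single_le_sum (fun k _ => sq_nonneg (x m k)) (Finset.mem_univ j)).trans (hxc m)
  obtain ⟨y, -, φ, hφ, hy⟩ := (isCompact_closedBall _ _).tendsto_subseq hball
  have hMφ : Tendsto (fun m => Ms (φ m)) atTop (𝓝 (M : Matrix (Fin N) (Fin D) ℝ)) :=
    hlim.comp hφ.tendsto_atTop
  have hfeas : Mᵀ *ᵥ y = M i := by
    refine tendsto_nhds_unique ?_ ((continuous_apply i).tendsto M |>.comp hMφ)
    have hcont : Continuous fun p : Matrix (Fin N) (Fin D) ℝ × (Fin N → ℝ) => p.1ᵀ *ᵥ p.2 :=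
      continuous_fst.matrix_transpose.matrix_mulVec continuous_snd
    exact (hcont.tendsto (M, y) |>.comp (hMφ.prodMk_nhds hy)).congr fun m => hx (φ m)
  calc lev M i ≤ ∑ j, y j ^ 2 := lev_le_sum_sq M hfeas
    _ ≤ c := le_of_tendsto
        (tendsto_finsetSum _ fun j _ => ((continuous_apply j).tendsto y |>.comp hy).pow 2)
        (Eventually.of_forall fun m => hxc (φ m))

theorem transpose_updateRow_mulVec (i : Fin N) (r : Fin D → ℝ) (y : Fin N → ℝ) :
    (M.updateRow i r)ᵀ *ᵥ y = Mᵀ *ᵥ y + y i • (r - M i) := by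
  ext j
  simp only [mulVec, dotProduct, transpose_apply, Pi.add_apply, Pi.smul_apply, Pi.sub_apply,
    smul_eq_mul]
  have hne : ∀ k ∈ ({i}ᶜ : Finset (Fin N)), k ≠ i := fun k hk => by simpa using hk
  rw [Fintype.sum_eq_add_sum_compl i, Fintype.sum_eq_add_sum_compl i (fun k => M k j * y k),
    Finset.sum_congr rfl fun k hk => by rw [updateRow_ne (hne k hk)], updateRow_self]
  ring

theorem transpose_mulVec_update (i : Fin N) (x : Fin N → ℝ) (a : ℝ) :
    Mᵀ *ᵥ Function.update x i a = Mᵀ *ᵥ x + (a - x i) • M i := by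
  ext j
  simp only [mulVec, dotProduct, transpose_apply, Pi.add_apply, Pi.smul_apply, smul_eq_mul]
  have hne : ∀ k ∈ ({i}ᶜ : Finset (Fin N)), k ≠ i := fun k hk => by simpa using hk
  rw [Fintype.sum_eq_add_sum_compl i, Fintype.sum_eq_add_sum_compl i (fun k => M k j * x k),
    Finset.sum_congr rfl fun k hk => by rw [Function.update_of_ne (hne k hk)],
    Function.update_self]
  ring

theorem lev_le_lev_updateRow_smul {i j : Fin N} (hji : j ≠ i) {c : ℝ} (hc : |c| ≤ 1) :
    lev M j ≤ lev (M.updateRow i (c • M i)) j := by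
  obtain ⟨x, hx, hlev⟩ := exists_lev_eq_sum_sq (M.updateRow i (c • M i)) j
  rw [updateRow_ne hji, transpose_updateRow_mulVec] at hx
  have hfeas : Mᵀ *ᵥ Function.update x i (c * x i) = M j := by
    rw [transpose_mulVec_update, ← hx]
    module
  refine (lev_le_sum_sq M hfeas).trans (hlev ▸ Finset.sum_le_sum fun k _ => ?_)
  rcases eq_or_ne k i with rfl | hk
  · rw [Function.update_self, mul_pow]
    exact mul_le_of_le_one_left (sq_nonneg _) (sq_le_one_iff_abs_le_one c |>.2 hc)
  · rw [Function.update_of_ne hk]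

theorem lev_updateRow_smul_self_le {i : Fin N} {x : Fin N → ℝ} (hx : Mᵀ *ᵥ x = M i) {c : ℝ}
    (hc : c ≠ 0) :
    lev (M.updateRow i (c • M i)) i ≤ ∑ j, Function.update x i (1 - (1 - x i) / c) j ^ 2 := by
  -- The other rows contribute `(1 - xᵢ) • mᵢ`, so the new coefficient `y` of `c • mᵢ` must
  -- satisfy `c * y = c - (1 - xᵢ)`.
  refine lev_le_sum_sq _ ?_
  rw [updateRow_self, transpose_updateRow_mulVec, transpose_mulVec_update, hx,
    Function.update_self]
  ext k
  simp only [Pi.add_apply, Pi.smul_apply, Pi.sub_apply, smul_eq_mul]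
  field_simp
  ring

theorem eventually_lev_updateRow_smul_self_lt {i : Fin N} {u : ℝ} (h : lev M i < u) :
    ∀ᶠ c : ℝ in 𝓝 1, lev (M.updateRow i (c • M i)) i < u := by
  obtain ⟨x, hx, hlev⟩ := exists_lev_eq_sum_sq M i
  have hcont :
      ContinuousAt (fun c : ℝ => ∑ j, Function.update x i (1 - (1 - x i) / c) j ^ 2) 1 := by
    fun_prop (disch := norm_num)
  have hone : ∑ j, Function.update x i (1 - (1 - x i) / 1) j ^ 2 = lev M i := by
    rw [hlev, div_one, sub_sub_cancel, Function.update_eq_self]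
  have hlt : ∀ᶠ c in 𝓝 (1 : ℝ), ∑ j, Function.update x i (1 - (1 - x i) / c) j ^ 2 < u :=
    hcont.eventually_lt continuousAt_const (by rwa [hone])
  filter_upwards [hlt, eventually_ne_nhds one_ne_zero] with c hc hc0
  exact (lev_updateRow_smul_self_le M hx hc0).trans_lt hc

end Leverage

section Ridge

variable {n d : ℕ}

noncomputable def ridge (A : Matrix (Fin n) (Fin d) ℝ) (w : Fin n → ℝ) (ε : ℝ) :
    Matrix (Fin (n + d)) (Fin d) ℝ :=
  (fromRows (diagonal w * A) (ε • 1)).submatrix finSumFinEquiv.symm id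

variable (A : Matrix (Fin n) (Fin d) ℝ)

theorem ridge_castAdd (w : Fin n → ℝ) (ε : ℝ) (i : Fin n) :
    ridge A w ε (Fin.castAdd d i) = w i • A i := by
  ext j; simp [ridge, diagonal_mul]

theorem ridge_natAdd (w : Fin n → ℝ) (ε : ℝ) (k : Fin d) :
    ridge A w ε (Fin.natAdd n k) = ε • (1 : Matrix (Fin d) (Fin d) ℝ) k := by
  ext j; simp [ridge]

theorem transpose_ridge_mulVec (w : Fin n → ℝ) (ε : ℝ) (x : Fin (n + d) → ℝ) :
    (ridge A w ε)ᵀ *ᵥ x =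
      (diagonal w * A)ᵀ *ᵥ (fun k => x (Fin.castAdd d k)) + ε • fun k => x (Fin.natAdd n k) := by
  ext j
  simp [ridge, mulVec, dotProduct, Fin.sum_univ_add, one_apply, mul_comm]

theorem continuous_ridge : Continuous fun p : (Fin n → ℝ) × ℝ => ridge A p.1 p.2 := by
  refine continuous_matrix fun p j => Fin.addCases (fun i => ?_) (fun k => ?_) p
  · simp only [ridge_castAdd]
    fun_prop
  · simp only [ridge_natAdd]
    fun_prop

theorem lev_le_lev_ridge_zero (w : Fin n → ℝ) (i : Fin n) :
    lev (diagonal w * A) i ≤ lev (ridge A w 0) (Fin.castAdd d i) := by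
  obtain ⟨x, hx, hlev⟩ := exists_lev_eq_sum_sq (ridge A w 0) (Fin.castAdd d i)
  rw [transpose_ridge_mulVec, zero_smul, add_zero, ridge_castAdd] at hx
  refine (lev_le_sum_sq _ (hx.trans ?_)).trans ?_
  · ext j
    simp [diagonal_mul]
  rw [hlev, Fin.sum_univ_add]
  exact le_add_of_nonneg_right (Finset.sum_nonneg fun k _ => sq_nonneg _)

theorem lev_ridge_le (w : Fin n → ℝ) {ε : ℝ} (hε : ε ≠ 0) (i : Fin n) :
    lev (ridge A w ε) (Fin.castAdd d i) ≤ w i ^ 2 * (∑ j, A i j ^ 2) / ε ^ 2 := by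
  let x : Fin (n + d) → ℝ := Fin.append 0 ((w i / ε) • A i)
  have hx : (ridge A w ε)ᵀ *ᵥ x = ridge A w ε (Fin.castAdd d i) := by
    rw [transpose_ridge_mulVec, ridge_castAdd]
    ext j
    simp only [x, mulVec, dotProduct, transpose_apply, Fin.append_left,
      Fin.append_right, Pi.zero_apply, mul_zero, sum_const_zero, zero_add, Pi.add_apply,
      Pi.smul_apply, smul_eq_mul]
    field_simp
  refine (lev_le_sum_sq _ hx).trans_eq ?_
  simp [x, Fin.sum_univ_add, mul_pow, div_pow, Finset.mul_sum, Finset.sum_div, div_mul_eq_mul_div]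

theorem ridge_update_mul (w : Fin n → ℝ) (ε : ℝ) (i : Fin n) (c : ℝ) :
    ridge A (Function.update w i (c * w i)) ε =
      (ridge A w ε).updateRow (Fin.castAdd d i) (c • ridge A w ε (Fin.castAdd d i)) := by
  ext p j
  refine Fin.addCases (fun k => ?_) (fun k => ?_) p
  · rcases eq_or_ne k i with rfl | hk
    · simp [ridge_castAdd, mul_assoc]
    · rw [updateRow_ne (by simpa using hk), ridge_castAdd, ridge_castAdd,
        Function.update_of_ne hk]
  · have hne : Fin.natAdd n k ≠ Fin.castAdd d i := by
      rw [Ne, Fin.ext_iff, Fin.val_natAdd, Fin.val_castAdd]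
      omega
    rw [updateRow_ne hne, ridge_natAdd, ridge_natAdd]

theorem lev_ridge_update_le {w : Fin n → ℝ} (ε : ℝ) {i j : Fin n} (hji : j ≠ i) {t : ℝ}
    (hw : 0 ≤ w i) (ht : w i ≤ t) :
    lev (ridge A (Function.update w i t) ε) (Fin.castAdd d j) ≤
      lev (ridge A w ε) (Fin.castAdd d j) := by
  rcases ht.eq_or_lt with rfl | hlt
  · rw [Function.update_eq_self]
  have ht0 : 0 < t := hw.trans_lt hlt
  have hw' : Function.update (Function.update w i t) i (w i / t * t) = w := by
    rw [div_mul_cancel₀ _ ht0.ne', Function.update_idem, Function.update_eq_self]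
  have hridge := ridge_update_mul A (Function.update w i t) ε i (w i / t)
  rw [Function.update_self, hw'] at hridge
  rw [hridge]
  refine lev_le_lev_updateRow_smul _ (by simpa using hji) ?_
  rw [abs_of_nonneg (div_nonneg hw ht0.le)]
  exact div_le_one_of_le₀ ht ht0.le

theorem eventually_lev_ridge_update_lt {w : Fin n → ℝ} {ε : ℝ} (hε : ε ≠ 0) {i : Fin n} {u : ℝ}
    (h : lev (ridge A w ε) (Fin.castAdd d i) < u) :
    ∀ᶠ t in 𝓝 (w i), lev (ridge A (Function.update w i t) ε) (Fin.castAdd d i) < u := by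
  rcases eq_or_ne (w i) 0 with hw | hw
  · have hu : 0 < u := (lev_nonneg _ _).trans_lt h
    have hcont : ContinuousAt (fun t : ℝ => t ^ 2 * (∑ j, A i j ^ 2) / ε ^ 2) (w i) := by
      fun_prop
    have hlt : ∀ᶠ t in 𝓝 (w i), t ^ 2 * (∑ j, A i j ^ 2) / ε ^ 2 < u :=
      hcont.eventually_lt continuousAt_const (by simpa [hw] using hu)
    filter_upwards [hlt] with t ht
    refine (lev_ridge_le A _ hε i).trans_lt ?_
    rwa [Function.update_self]
  · have hscale : Tendsto (fun t => t / w i) (𝓝 (w i)) (𝓝 1) := by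
      simpa [hw] using (continuousAt_id.div_const (w i)).tendsto (x := w i)
    filter_upwards [hscale.eventually (eventually_lev_updateRow_smul_self_lt _ h)] with t ht
    rwa [← div_mul_cancel₀ t hw, ridge_update_mul]

end Ridge

theorem isClosed_setOf_sum_filter_ne_le {ι : Type*} [Fintype ι] {u : ι → ℝ} (hu : ∀ i, 0 ≤ u i)
    (a c : ℝ) : IsClosed {w : ι → ℝ | ∑ i ∈ univ.filter (fun i => w i ≠ a), u i ≤ c} := by
  refine isOpen_compl_iff.1 (isOpen_iff_mem_nhds.2 fun w hw => ?_)
  simp only [mem_compl_iff, mem_ofPred_eq, not_le] at hw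
  have hne : ∀ᶠ v in 𝓝 w, ∀ i, w i ≠ a → v i ≠ a := by
    refine eventually_all.2 fun i => ?_
    by_cases hi : w i = a
    · exact Eventually.of_forall fun v h => (h hi).elim
    · exact ((continuous_apply i).continuousAt.eventually_ne hi).mono fun v hv _ => hv
  filter_upwards [hne] with v hv
  exact not_le.2 <| hw.trans_le <|
    sum_le_sum_of_subset_of_nonneg (monotone_filter_right _ fun i _ => hv i) fun i _ _ => hu i

section Reweighting

variable {n d : ℕ} (A : Matrix (Fin n) (Fin d) ℝ) (u : Fin n → ℝ)

def ridgeFeasible (ε : ℝ) : Set (Fin n → ℝ) :=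
  univ.pi (fun _ => Icc 0 1) ∩ {w | ∀ i, lev (ridge A w ε) (Fin.castAdd d i) ≤ u i}

theorem isClosed_setOf_lev_ridge_le (i : Fin n) (c : ℝ) :
    IsClosed {p : (Fin n → ℝ) × ℝ | lev (ridge A p.1 p.2) (Fin.castAdd d i) ≤ c} :=
  ((lowerSemicontinuous_lev (Fin.castAdd d i)).comp (continuous_ridge A)).isClosed_preimage c

theorem isCompact_ridgeFeasible (ε : ℝ) : IsCompact (ridgeFeasible A u ε) := by
  refine (isCompact_univ_pi fun _ => isCompact_Icc).inter_right ?_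
  rw [ofPred_forall]
  exact isClosed_iInter fun i =>
    (isClosed_setOf_lev_ridge_le A i (u i)).preimage (continuous_id.prodMk continuous_const)

theorem zero_mem_ridgeFeasible (hu : ∀ i, 0 ≤ u i) (ε : ℝ) : 0 ∈ ridgeFeasible A u ε := by
  refine ⟨fun k _ => ⟨le_rfl, zero_le_one⟩, fun i => ?_⟩
  have hx : (ridge A 0 ε)ᵀ *ᵥ 0 = ridge A 0 ε (Fin.castAdd d i) := by
    rw [mulVec_zero, ridge_castAdd, Pi.zero_apply, zero_smul]
  simpa using (lev_le_sum_sq _ hx).trans (by simpa using hu i)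

variable {A u}

theorem le_lev_ridge_of_isMaxOn (hu : ∀ i, 0 < u i) {ε : ℝ} (hε : ε ≠ 0) {w : Fin n → ℝ}
    (hw : w ∈ ridgeFeasible A u ε)
    (hmax : IsMaxOn (fun v => ∑ i, u i * v i) (ridgeFeasible A u ε) w) {i : Fin n}
    (hi : w i < 1) : u i ≤ lev (ridge A w ε) (Fin.castAdd d i) := by
  by_contra! h
  obtain ⟨hbox, hlev⟩ := hw
  have h0 : 0 ≤ w i := (hbox i trivial).1
  have hraise : ∀ᶠ t in 𝓝[>] (w i), Function.update w i t ∈ ridgeFeasible A u ε ∧ w i < t := by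
    filter_upwards [nhdsWithin_le_nhds (eventually_lev_ridge_update_lt A hε h),
      nhdsWithin_le_nhds (eventually_lt_nhds hi), self_mem_nhdsWithin] with t hlt ht1 hwt
    refine ⟨⟨fun k _ => ?_, fun j => ?_⟩, hwt⟩
    · rcases eq_or_ne k i with rfl | hk
      · rw [Function.update_self]
        exact ⟨h0.trans hwt.le, ht1.le⟩
      · rw [Function.update_of_ne hk]
        exact hbox k trivial
    · rcases eq_or_ne j i with rfl | hj
      · exact hlt.le
      · exact (lev_ridge_update_le A ε hj h0 hwt.le).trans (hlev j)
  obtain ⟨t, hmem, hwt⟩ := hraise.exists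
  have hle : ∑ k, u k * Function.update w i t k ≤ ∑ k, u k * w k := hmax hmem
  refine hle.not_gt (Finset.sum_lt_sum (fun k _ => ?_) ⟨i, mem_univ i, ?_⟩)
  · rcases eq_or_ne k i with rfl | hk
    · rw [Function.update_self]
      exact mul_le_mul_of_nonneg_left hwt.le (hu k).le
    · rw [Function.update_of_ne hk]
  · rw [Function.update_self]
    exact mul_lt_mul_of_pos_left hwt (hu i)

theorem exists_mem_ridgeFeasible_sum_le (hu : ∀ i, 0 < u i) {ε : ℝ} (hε : ε ≠ 0) :
    ∃ w ∈ ridgeFeasible A u ε, ∑ i ∈ univ.filter (fun i => w i ≠ 1), u i ≤ d := by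
  obtain ⟨w, hw, hmax⟩ := (isCompact_ridgeFeasible A u ε).exists_isMaxOn
    ⟨0, zero_mem_ridgeFeasible A u (fun i => (hu i).le) ε⟩
    (by fun_prop : Continuous fun v : Fin n → ℝ => ∑ i, u i * v i).continuousOn
  refine ⟨w, hw, ?_⟩
  calc ∑ i ∈ univ.filter (fun i => w i ≠ 1), u i
      ≤ ∑ i ∈ univ.filter (fun i => w i ≠ 1), lev (ridge A w ε) (Fin.castAdd d i) :=
        sum_le_sum fun i hi => le_lev_ridge_of_isMaxOn hu hε hw hmax
          (lt_of_le_of_ne (hw.1 i trivial).2 (mem_filter.1 hi).2)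
    _ ≤ ∑ i, lev (ridge A w ε) (Fin.castAdd d i) :=
        sum_le_sum_of_subset_of_nonneg (filter_subset _ _) fun _ _ _ => lev_nonneg _ _
    _ ≤ ∑ p, lev (ridge A w ε) p := by
        rw [Fin.sum_univ_add]
        exact le_add_of_nonneg_right (sum_nonneg fun _ _ => lev_nonneg _ _)
    _ ≤ d := sum_lev_le _

end Reweighting

/-- leverage score bounding row reweighting: for any `A ∈ ℝ^{n×d}` and
any `u` with all entries positive, there is a diagonal matrix `W` with entries in `[0,1]`
such that `τᵢ(WA) ≤ uᵢ` for all `i` and `∑_{i : Wᵢᵢ ≠ 1} uᵢ ≤ d`. -/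
theorem stmt8 {n d : ℕ} (A : Matrix (Fin n) (Fin d) ℝ) (u : Fin n → ℝ)
    (hu : ∀ i, 0 < u i) :
    ∃ w : Fin n → ℝ,
      (∀ i, 0 ≤ w i ∧ w i ≤ 1) ∧
      (∀ i, lev (Matrix.diagonal w * A) i ≤ u i) ∧
      (∑ i ∈ Finset.univ.filter (fun i => w i ≠ 1), u i) ≤ (d : ℝ) := by
  choose W hW hWsum using fun m : ℕ =>
    exists_mem_ridgeFeasible_sum_le (A := A) hu (Nat.one_div_pos_of_nat (α := ℝ) (n := m)).ne'
  obtain ⟨w, hw, φ, hφ, hWφ⟩ :=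
    (isCompact_univ_pi fun _ => isCompact_Icc).tendsto_subseq fun m => (hW m).1
  have hε : Tendsto (fun m => 1 / ((φ m : ℝ) + 1)) atTop (𝓝 0) :=
    tendsto_one_div_add_atTop_nhds_zero_nat.comp hφ.tendsto_atTop
  refine ⟨w, fun i => hw i trivial, fun i => (lev_le_lev_ridge_zero A w i).trans ?_, ?_⟩
  · have hlim : (w, (0 : ℝ)) ∈
        {p : (Fin n → ℝ) × ℝ | lev (ridge A p.1 p.2) (Fin.castAdd d i) ≤ u i} :=
      (isClosed_setOf_lev_ridge_le A i (u i)).mem_of_tendsto (hWφ.prodMk_nhds hε)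
        (.of_forall fun m => (hW (φ m)).2 i)
    exact hlim
  · exact (isClosed_setOf_sum_filter_ne_le (fun i => (hu i).le) 1 d).mem_of_tendsto hWφ
      (Eventually.of_forall fun m => hWsum (φ m))
end

section
/- Let A be a real n×d matrix with rows a_1,…,a_n, let γ ∈ (0,1) and i ∈ {1,…,n}, and let W be the n×n diagonal matrix with W_{ii} = √(1−γ) and W_{jj} = 1 for all j ≠ i. Let τ_{ij}(A) denote the j-th entry of the unique minimum-norm solution x of Aᵀx = a_i. Then for every j ≠ i, τ_j(WA)·(1 − γ·τ_i(A)) = τ_j(A)·(1 − γ·τ_i(A)) + γ·τ_{ij}(A)², i.e. τ_j(WA) = τ_j(A) + γτ_{ij}(A)²/(1−γτ_i(A)), and consequently τ_j(WA) ≥ τ_j(A). -/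
/-!
Solutions `y` of `(WA)ᵀy = a_j` (for `j ≠ i`) are the vectors `y = W⁻¹z` with `Aᵀz = a_j`, and
`‖W⁻¹z‖² = ‖z‖² + c z_i²` with `c = γ/(1-γ)`. Write `z = z₀ + k` with `z₀` the minimum-norm
solution for row `j` and `k ∈ ker Aᵀ`. If `x` is the minimum-norm solution for row `i`, then
`r = e_i - x` is the projection of `e_i` onto `ker Aᵀ`, so `k_i = ⟨k, r⟩`, `‖r‖² = 1 - τ_i(A)`,
and `(z₀)_i = x_j = τ_{ij}(A)`. The cost becomes
`τ_j(A) + ‖k‖² + c (τ_{ij} + ⟨k, r⟩)²`; by Cauchy–Schwarz it is minimised over multiples of `r`,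
where the minimum is `c τ_{ij}² / (1 + c (1 - τ_i)) = γ τ_{ij}² / (1 - γ τ_i)`.
-/

open Matrix

open Finset

lemma sum_sq_eq_dotProduct_self {ι : Type*} [Fintype ι] (v : ι → ℝ) : ∑ k, v k ^ 2 = v ⬝ᵥ v := by
  simp only [dotProduct, sq]

lemma sq_dotProduct_le {ι : Type*} [Fintype ι] (u v : ι → ℝ) :
    (u ⬝ᵥ v) ^ 2 ≤ (u ⬝ᵥ u) * (v ⬝ᵥ v) := by
  rw [← sum_sq_eq_dotProduct_self, ← sum_sq_eq_dotProduct_self]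
  exact sum_mul_sq_le_sq_mul_sq univ u v

lemma exists_transpose_mul_self_mulVec_eq {m n : Type*} [Fintype m] [Fintype n]
    (M : Matrix m n ℝ) (v : m → ℝ) : ∃ u, (Mᵀ * M) *ᵥ u = Mᵀ *ᵥ v := by
  have hle : LinearMap.range (Mᵀ * M).mulVecLin ≤ LinearMap.range Mᵀ.mulVecLin := by
    rw [mulVecLin_mul]
    exact LinearMap.range_comp_le_range _ _
  have hrange : LinearMap.range (Mᵀ * M).mulVecLin = LinearMap.range Mᵀ.mulVecLin :=
    Submodule.eq_of_le_of_finrank_eq hle ((rank_transpose_mul_self M).trans (rank_transpose M).symm)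
  obtain ⟨u, hu⟩ : Mᵀ *ᵥ v ∈ LinearMap.range (Mᵀ * M).mulVecLin := hrange ▸ ⟨v, rfl⟩
  exact ⟨u, hu⟩

lemma transpose_diagonal_mul_mulVec {m n R : Type*} [Fintype m] [DecidableEq m] [CommSemiring R]
    (w : m → R) (A : Matrix m n R) (y : m → R) : (diagonal w * A)ᵀ *ᵥ y = Aᵀ *ᵥ (w * y) := by
  rw [transpose_mul, diagonal_transpose, ← mulVec_mulVec]
  congr 1
  ext k
  exact mulVec_diagonal w y k

lemma diagonal_mul_row_of_eq_one {m n R : Type*} [Fintype m] [DecidableEq m] [Semiring R]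
    {w : m → R} (A : Matrix m n R) {j : m} (hj : w j = 1) : (diagonal w * A) j = A j := by
  ext
  rw [diagonal_mul, hj, one_mul]

lemma mul_sq_div_one_add_le {c ρ K s u : ℝ} (hc : 0 ≤ c) (hρ : 0 ≤ ρ) (hK : 0 ≤ K)
    (hu : u ^ 2 ≤ K * ρ) : c * s ^ 2 / (1 + c * ρ) ≤ K + c * (s + u) ^ 2 := by
  rw [div_le_iff₀ (by positivity)]
  rcases hρ.eq_or_lt with rfl | hρ
  · obtain rfl : u = 0 :=
      pow_eq_zero_iff two_ne_zero |>.1 (le_antisymm (by simpa using hu) (sq_nonneg u))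
    simpa using hK
  · refine le_of_mul_le_mul_left ?_ hρ
    -- `ρ ((1 + cρ)(K + c v²) - c s²) = (1 + cρ)(Kρ - u²) + (u + cρv)²` with `v = s + u`
    nlinarith [sq_nonneg (u + c * ρ * (s + u)),
      mul_nonneg (by positivity : 0 ≤ 1 + c * ρ) (sub_nonneg.2 hu)]

section LeverageScore

variable {n d : ℕ} (M : Matrix (Fin n) (Fin d) ℝ)

/-- Orthogonality to `ker Mᵀ` characterises the minimum-norm solutions of `Mᵀz = m_j`
(`IsMinNormSol.lev_eq`, `IsMinNormSol.of_lev_eq`). -/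
def IsMinNormSol (j : Fin n) (z : Fin n → ℝ) : Prop :=
  Mᵀ *ᵥ z = M j ∧ ∀ k, Mᵀ *ᵥ k = 0 → z ⬝ᵥ k = 0

variable {M}

lemma mulVec_transpose_single_one (j : Fin n) : Mᵀ *ᵥ Pi.single j 1 = M j := by
  ext
  simp

lemma mulVec_transpose_single_one_sub {j : Fin n} {z : Fin n → ℝ} (hz : Mᵀ *ᵥ z = M j) :
    Mᵀ *ᵥ (Pi.single j 1 - z) = 0 := by
  rw [mulVec_sub, mulVec_transpose_single_one, hz, sub_self]

lemma lev_le {j : Fin n} {z : Fin n → ℝ} (hz : Mᵀ *ᵥ z = M j) : lev M j ≤ z ⬝ᵥ z :=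
  csInf_le ⟨0, by rintro t ⟨y, -, rfl⟩; positivity⟩ ⟨z, hz, (sum_sq_eq_dotProduct_self z).symm⟩

lemma le_lev {j : Fin n} {t : ℝ} (h : ∀ z, Mᵀ *ᵥ z = M j → t ≤ z ⬝ᵥ z) : t ≤ lev M j :=
  le_csInf ⟨_, _, mulVec_transpose_single_one j, rfl⟩ <| by
    rintro _ ⟨z, hz, rfl⟩
    exact (sum_sq_eq_dotProduct_self z).symm ▸ h z hz

lemma lev_le_one (j : Fin n) : lev M j ≤ 1 := by
  simpa using lev_le (mulVec_transpose_single_one (M := M) j)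

lemma exists_isMinNormSol (j : Fin n) : ∃ z, IsMinNormSol M j z := by
  obtain ⟨u, hu⟩ := exists_transpose_mul_self_mulVec_eq M (Pi.single j 1)
  refine ⟨M *ᵥ u, ?_, fun k hk => ?_⟩
  · rw [mulVec_mulVec, hu, mulVec_transpose_single_one]
  · rw [dotProduct_comm, dotProduct_mulVec, ← mulVec_transpose, hk, zero_dotProduct]

namespace IsMinNormSol

variable {i j : Fin n} {x z k : Fin n → ℝ}

lemma dotProduct_add_self (hz : IsMinNormSol M j z) (hk : Mᵀ *ᵥ k = 0) :
    (z + k) ⬝ᵥ (z + k) = z ⬝ᵥ z + k ⬝ᵥ k := by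
  simp only [add_dotProduct, dotProduct_add, hz.2 k hk, dotProduct_comm k z]
  ring

lemma lev_eq (hz : IsMinNormSol M j z) : lev M j = z ⬝ᵥ z := by
  refine le_antisymm (lev_le hz.1) (le_lev fun y hy => ?_)
  have hk : Mᵀ *ᵥ (y - z) = 0 := by rw [mulVec_sub, hy, hz.1, sub_self]
  have hsq := hz.dotProduct_add_self hk
  rw [add_sub_cancel] at hsq
  rw [hsq]
  exact le_add_of_nonneg_right (dotProduct_self_star_nonneg (y - z))

lemma of_lev_eq (hx : Mᵀ *ᵥ x = M j) (hmin : x ⬝ᵥ x = lev M j) : IsMinNormSol M j x := by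
  obtain ⟨z, hz⟩ := exists_isMinNormSol (M := M) j
  have hk : Mᵀ *ᵥ (x - z) = 0 := by rw [mulVec_sub, hx, hz.1, sub_self]
  have hsq := hz.dotProduct_add_self hk
  rw [add_sub_cancel, hmin, hz.lev_eq, left_eq_add, dotProduct_self_eq_zero, sub_eq_zero] at hsq
  exact hsq ▸ hz

lemma apply_eq_dotProduct (hx : IsMinNormSol M i x) (hz : Mᵀ *ᵥ z = M j) : x j = x ⬝ᵥ z := by
  have := hx.2 _ (mulVec_transpose_single_one_sub hz)
  rwa [dotProduct_sub, dotProduct_single_one, sub_eq_zero] at this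

lemma apply_comm (hx : IsMinNormSol M i x) (hz : IsMinNormSol M j z) : x j = z i := by
  rw [hx.apply_eq_dotProduct hz.1, hz.apply_eq_dotProduct hx.1, dotProduct_comm]

lemma apply_self (hx : IsMinNormSol M i x) : x i = lev M i := by
  rw [hx.apply_eq_dotProduct hx.1, hx.lev_eq]

lemma dotProduct_single_one_sub (hx : IsMinNormSol M i x) (hk : Mᵀ *ᵥ k = 0) :
    k ⬝ᵥ (Pi.single i 1 - x) = k i := by
  rw [dotProduct_sub, dotProduct_single_one, dotProduct_comm, hx.2 k hk, sub_zero]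

lemma dotProduct_single_one_sub_self (hx : IsMinNormSol M i x) :
    (Pi.single i 1 - x) ⬝ᵥ (Pi.single i 1 - x) = 1 - lev M i := by
  rw [hx.dotProduct_single_one_sub (mulVec_transpose_single_one_sub hx.1), Pi.sub_apply,
    Pi.single_eq_same, hx.apply_self]

end IsMinNormSol

end LeverageScore

section RowDownweighting

variable {n d : ℕ} {A : Matrix (Fin n) (Fin d) ℝ} {γ : ℝ} {i j : Fin n} {w x z : Fin n → ℝ}

lemma ne_zero_of_eq_sqrt_one_sub (hγ1 : γ < 1) (hwi : w i = Real.sqrt (1 - γ))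
    (hwj : ∀ j ≠ i, w j = 1) (m : Fin n) : w m ≠ 0 := by
  by_cases hm : m = i
  · rw [hm, hwi]
    exact (Real.sqrt_pos.2 (sub_pos.2 hγ1)).ne'
  · rw [hwj m hm]
    exact one_ne_zero

lemma sum_sq_div_eq (hγ1 : γ < 1) (hwi : w i = Real.sqrt (1 - γ)) (hwj : ∀ j ≠ i, w j = 1)
    (v : Fin n → ℝ) : ∑ m, (v m / w m) ^ 2 = v ⬝ᵥ v + γ / (1 - γ) * v i ^ 2 := by
  have h1γ : 0 < 1 - γ := sub_pos.2 hγ1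
  rw [← sum_sq_eq_dotProduct_self, ← sub_eq_iff_eq_add', ← sum_sub_distrib,
    sum_eq_single i (fun m _ hm => by rw [hwj m hm, div_one, sub_self]) (by simp),
    hwi, div_pow, Real.sq_sqrt h1γ.le]
  field_simp
  ring

lemma sum_sq_div_add_eq (hγ1 : γ < 1) (hwi : w i = Real.sqrt (1 - γ)) (hwj : ∀ j ≠ i, w j = 1)
    (hx : IsMinNormSol A i x) (hz : IsMinNormSol A j z) {k : Fin n → ℝ} (hk : Aᵀ *ᵥ k = 0) :
    ∑ m, ((z + k) m / w m) ^ 2 =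
      lev A j + (k ⬝ᵥ k + γ / (1 - γ) * (x j + k ⬝ᵥ (Pi.single i 1 - x)) ^ 2) := by
  rw [sum_sq_div_eq hγ1 hwi hwj, hz.dotProduct_add_self hk, ← hz.lev_eq, Pi.add_apply,
    ← hz.apply_comm hx, hx.dotProduct_single_one_sub hk]
  ring

lemma lev_diagonal_mul_le (hγ0 : 0 ≤ γ) (hγ1 : γ < 1) (hwi : w i = Real.sqrt (1 - γ))
    (hwj : ∀ j ≠ i, w j = 1) (hx : IsMinNormSol A i x) (hj : j ≠ i) :
    lev (diagonal w * A) j ≤ lev A j + γ * x j ^ 2 / (1 - γ * lev A i) := by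
  have h1γ : 0 < 1 - γ := sub_pos.2 hγ1
  obtain ⟨z, hz⟩ := exists_isMinNormSol (M := A) j
  have hr := mulVec_transpose_single_one_sub hx.1
  have hD : 0 < 1 - γ * lev A i := by nlinarith [lev_le_one (M := A) i]
  -- `k = t r` attains the bound of `mul_sq_div_one_add_le`
  set t := -(γ * x j) / (1 - γ * lev A i)
  have htr : Aᵀ *ᵥ (t • (Pi.single i 1 - x)) = 0 := by rw [mulVec_smul, hr, smul_zero]
  have hsol : (diagonal w * A)ᵀ *ᵥ (fun m => (z + t • (Pi.single i 1 - x) : Fin n → ℝ) m / w m) =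
      (diagonal w * A) j := by
    rw [transpose_diagonal_mul_mulVec, diagonal_mul_row_of_eq_one A (hwj j hj), ← add_zero (A j),
      ← hz.1, ← htr, ← mulVec_add]
    congr 1
    ext m
    exact mul_div_cancel₀ _ (ne_zero_of_eq_sqrt_one_sub hγ1 hwi hwj m)
  refine (lev_le hsol).trans_eq ?_
  rw [← sum_sq_eq_dotProduct_self, sum_sq_div_add_eq hγ1 hwi hwj hx hz htr, dotProduct_smul,
    smul_dotProduct, hx.dotProduct_single_one_sub_self, smul_eq_mul, smul_eq_mul]
  simp only [t]
  field_simp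
  ring

lemma le_lev_diagonal_mul (hγ0 : 0 ≤ γ) (hγ1 : γ < 1) (hwi : w i = Real.sqrt (1 - γ))
    (hwj : ∀ j ≠ i, w j = 1) (hx : IsMinNormSol A i x) (hj : j ≠ i) :
    lev A j + γ * x j ^ 2 / (1 - γ * lev A i) ≤ lev (diagonal w * A) j := by
  have h1γ : 0 < 1 - γ := sub_pos.2 hγ1
  have hcoef : γ * x j ^ 2 / (1 - γ * lev A i) =
      γ / (1 - γ) * x j ^ 2 / (1 + γ / (1 - γ) * (1 - lev A i)) := by
    field_simp
    ring
  obtain ⟨z, hz⟩ := exists_isMinNormSol (M := A) j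
  refine le_lev fun y hy => ?_
  have hk : Aᵀ *ᵥ (w * y - z) = 0 := by
    rw [mulVec_sub, ← transpose_diagonal_mul_mulVec, hy, diagonal_mul_row_of_eq_one A (hwj j hj),
      hz.1, sub_self]
  have hy' : y ⬝ᵥ y = ∑ m, ((z + (w * y - z)) m / w m) ^ 2 := by
    rw [← sum_sq_eq_dotProduct_self, add_sub_cancel]
    exact sum_congr rfl fun m _ => by
      rw [Pi.mul_apply, mul_div_cancel_left₀ _ (ne_zero_of_eq_sqrt_one_sub hγ1 hwi hwj m)]
  rw [hy', sum_sq_div_add_eq hγ1 hwi hwj hx hz hk, hcoef]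
  refine add_le_add le_rfl (mul_sq_div_one_add_le (div_nonneg hγ0 h1γ.le)
    (sub_nonneg.2 (lev_le_one i)) (dotProduct_self_star_nonneg (w * y - z)) ?_)
  rw [← hx.dotProduct_single_one_sub_self]
  exact sq_dotProduct_le _ _

lemma lev_diagonal_mul_eq (hγ0 : 0 ≤ γ) (hγ1 : γ < 1) (hwi : w i = Real.sqrt (1 - γ))
    (hwj : ∀ j ≠ i, w j = 1) (hx : IsMinNormSol A i x) (hj : j ≠ i) :
    lev (diagonal w * A) j = lev A j + γ * x j ^ 2 / (1 - γ * lev A i) :=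
  le_antisymm (lev_diagonal_mul_le hγ0 hγ1 hwi hwj hx hj)
    (le_lev_diagonal_mul hγ0 hγ1 hwi hwj hx hj)

end RowDownweighting

/-- rank-one update, other rows: if `W` is diagonal with
`Wᵢᵢ = √(1−γ)` and `Wⱼⱼ = 1` for `j ≠ i`, and `x` is a minimum-norm solution of
`Aᵀx = aᵢ` (so `xⱼ = τᵢⱼ(A)` is the cross leverage score), then for every `j ≠ i`,
`τⱼ(WA)·(1 − γτᵢ(A)) = τⱼ(A)·(1 − γτᵢ(A)) + γ·τᵢⱼ(A)²`, i.e.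
`τⱼ(WA) = τⱼ(A) + γτᵢⱼ(A)²/(1−γτᵢ(A))`, and consequently `τⱼ(WA) ≥ τⱼ(A)`. -/
theorem stmt11 {n d : ℕ} (A : Matrix (Fin n) (Fin d) ℝ) (γ : ℝ)
    (hγ0 : 0 < γ) (hγ1 : γ < 1) (i : Fin n)
    (w : Fin n → ℝ) (hwi : w i = Real.sqrt (1 - γ)) (hwj : ∀ j ≠ i, w j = 1)
    (x : Fin n → ℝ) (hx : Aᵀ *ᵥ x = A i) (hxmin : ∑ k, (x k) ^ 2 = lev A i) :
    ∀ j, j ≠ i →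
      lev (Matrix.diagonal w * A) j * (1 - γ * lev A i) =
        lev A j * (1 - γ * lev A i) + γ * (x j) ^ 2 ∧
      lev A j ≤ lev (Matrix.diagonal w * A) j := by
  have hxmin' : IsMinNormSol A i x :=
    .of_lev_eq hx ((sum_sq_eq_dotProduct_self x).symm.trans hxmin)
  have hD : 0 < 1 - γ * lev A i := by nlinarith [lev_le_one (M := A) i]
  intro j hj
  rw [lev_diagonal_mul_eq hγ0.le hγ1 hwi hwj hxmin' hj]
  exact ⟨by field_simp, le_add_of_nonneg_right (by positivity)⟩
end

section
/- Let A be a real n×d matrix, let W and W̄ be n×n nonnegative diagonal matrices, and let i ∈ {1,…,n} be an index with W_{ii} > 0 and W̄_{ii} > 0. Suppose Aᵀ W̄² A is invertible, and let σ ≥ 0 be a constant such that yᵀ A (Aᵀ W̄² A)⁻¹ Aᵀ y ≤ σ²·‖y‖₂² for all y ∈ ℝⁿ. Then τ_i(W̄A) ≤ (W̄_{ii}²/W_{ii}²) · (1 + σ · max_j |W_{jj} − W̄_{jj}|)² · τ_i(WA). -/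
open Matrix

/-- Generic comparison lemma for leverage scores. -/
lemma lev_le_of_map {n d : ℕ} (M₁ M₂ : Matrix (Fin n) (Fin d) ℝ) (i : Fin n)
    (c : ℝ) (hc : 0 < c)
    (h : ∀ x : Fin n → ℝ, M₂ᵀ *ᵥ x = M₂ i →
      ∃ y : Fin n → ℝ, M₁ᵀ *ᵥ y = M₁ i ∧ ∑ j, (y j) ^ 2 ≤ c * ∑ j, (x j) ^ 2) :
    lev M₁ i ≤ c * lev M₂ i := by
  have hbdd : BddBelow {t : ℝ | ∃ x : Fin n → ℝ, M₁ᵀ *ᵥ x = M₁ i ∧ t = ∑ j, (x j) ^ 2} := by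
    refine ⟨0, fun t ht => ?_⟩
    obtain ⟨x, -, rfl⟩ := ht
    positivity
  have hne : (M₂ᵀ *ᵥ (Pi.single i 1 : Fin n → ℝ)) = M₂ i := by
    funext k; simp [Matrix.mulVec, dotProduct, Pi.single_apply]
  have hne2 : ∃ t, t ∈ {t : ℝ | ∃ x : Fin n → ℝ, M₂ᵀ *ᵥ x = M₂ i ∧ t = ∑ j, (x j) ^ 2} :=
    ⟨_, ⟨Pi.single i 1, hne, rfl⟩⟩
  rw [show c * lev M₂ i = lev M₂ i * c by ring, ← div_le_iff₀ hc]
  refine le_csInf hne2 ?_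
  rintro t ⟨x, hx, rfl⟩
  obtain ⟨y, hy, hle⟩ := h x hx
  rw [div_le_iff₀ hc]
  calc lev M₁ i ≤ ∑ j, (y j) ^ 2 := csInf_le hbdd ⟨y, hy, rfl⟩
    _ ≤ c * ∑ j, (x j) ^ 2 := hle
    _ = (∑ j, (x j) ^ 2) * c := by ring

/-- comparing leverage scores under different weightings: for
nonnegative diagonal weightings `W`, `W̄` with `Wᵢᵢ, W̄ᵢᵢ > 0`, if `AᵀW̄²A` is
invertible and `σ² ≥ λ_max(A(AᵀW̄²A)⁻¹Aᵀ)`, then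
`τᵢ(W̄A) ≤ (W̄ᵢᵢ²/Wᵢᵢ²)·(1 + σ·max_j |Wⱼⱼ − W̄ⱼⱼ|)²·τᵢ(WA)`. -/
theorem stmt13 {n d : ℕ} (A : Matrix (Fin n) (Fin d) ℝ)
    (w wbar : Fin n → ℝ) (hw : ∀ j, 0 ≤ w j) (hwbar : ∀ j, 0 ≤ wbar j)
    (i : Fin n) (hwi : 0 < w i) (hwbari : 0 < wbar i)
    (hinv : IsUnit (Aᵀ * Matrix.diagonal (fun j => (wbar j) ^ 2) * A))
    (σ : ℝ) (hσ : 0 ≤ σ)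
    (hval : ∀ y : Fin n → ℝ,
      y ⬝ᵥ ((A * (Aᵀ * Matrix.diagonal (fun j => (wbar j) ^ 2) * A)⁻¹ * Aᵀ) *ᵥ y) ≤
        σ ^ 2 * ∑ j, (y j) ^ 2) :
    lev (Matrix.diagonal wbar * A) i ≤
      ((wbar i) ^ 2 / (w i) ^ 2) *
        (1 + σ * Finset.univ.sup' ⟨i, Finset.mem_univ i⟩ (fun j => |w j - wbar j|)) ^ 2 *
        lev (Matrix.diagonal w * A) i := by
  set ε : ℝ := Finset.univ.sup' ⟨i, Finset.mem_univ i⟩ (fun j => |w j - wbar j|) with hε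
  have hεle : ∀ j, |wbar j - w j| ≤ ε := by
    intro j; rw [abs_sub_comm, hε]
    exact Finset.le_sup' (fun j => |w j - wbar j|) (Finset.mem_univ j)
  have hε0 : 0 ≤ ε := le_trans (abs_nonneg _) (hεle i)
  set D : Matrix (Fin n) (Fin n) ℝ := Matrix.diagonal (fun j => (wbar j) ^ 2) with hD
  set G : Matrix (Fin d) (Fin d) ℝ := Aᵀ * D * A with hG
  set B : Matrix (Fin d) (Fin d) ℝ := G⁻¹ with hB
  have hGdet := (Matrix.isUnit_iff_isUnit_det G).mp hinv
  have hGB : G * B = 1 := Matrix.mul_nonsing_inv _ hGdet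
  have hBG : B * G = 1 := Matrix.nonsing_inv_mul _ hGdet
  have hGT : Gᵀ = G := by
    rw [hG, hD, Matrix.transpose_mul, Matrix.transpose_mul, Matrix.transpose_transpose,
      Matrix.diagonal_transpose, Matrix.mul_assoc]
  have hBT : Bᵀ = B := by rw [hB, Matrix.transpose_nonsing_inv, hGT]
  have hdd : Matrix.diagonal wbar * Matrix.diagonal wbar = D := by
    rw [hD, Matrix.diagonal_mul_diagonal]; congr 1; funext j; ring
  -- collapse lemmas
  have h1 : ∀ {m : ℕ} (X : Matrix (Fin d) (Fin m) ℝ),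
      Aᵀ * (D * (A * (B * X))) = X := by
    intro m X
    calc Aᵀ * (D * (A * (B * X))) = ((Aᵀ * D * A) * B) * X := by
          simp only [Matrix.mul_assoc]
      _ = (G * B) * X := by rw [← hG]
      _ = X := by rw [hGB, Matrix.one_mul]
  have h2 : ∀ {m : ℕ} (X : Matrix (Fin d) (Fin m) ℝ),
      B * (Aᵀ * (D * (A * X))) = X := by
    intro m X
    calc B * (Aᵀ * (D * (A * X))) = (B * (Aᵀ * D * A)) * X := by
          simp only [Matrix.mul_assoc]
      _ = (B * G) * X := by rw [← hG]
      _ = X := by rw [hBG, Matrix.one_mul]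
  set P : Matrix (Fin n) (Fin n) ℝ := Matrix.diagonal wbar * A * B * Aᵀ with hP
  have hPT : Pᵀ = A * (B * (Aᵀ * Matrix.diagonal wbar)) := by
    rw [hP]
    simp only [Matrix.transpose_mul, Matrix.transpose_transpose, Matrix.diagonal_transpose,
      hBT, Matrix.mul_assoc]
  have hPTP : Pᵀ * P = A * B * Aᵀ := by
    calc Pᵀ * P
        = A * (B * (Aᵀ * (Matrix.diagonal wbar * (Matrix.diagonal wbar * (A * (B * Aᵀ)))))) := by
          rw [hPT, hP]; simp only [Matrix.mul_assoc]
      _ = A * (B * (Aᵀ * (D * (A * (B * Aᵀ))))) := by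
          rw [← Matrix.mul_assoc (Matrix.diagonal wbar) (Matrix.diagonal wbar), hdd]
      _ = A * (B * Aᵀ) := by rw [h2]
      _ = A * B * Aᵀ := by rw [Matrix.mul_assoc]
  set dZ : Matrix (Fin n) (Fin n) ℝ := Matrix.diagonal (fun j => wbar j - w j) with hdZ
  have hTP : Aᵀ * Matrix.diagonal wbar * P = Aᵀ := by
    calc Aᵀ * Matrix.diagonal wbar * P
        = Aᵀ * (Matrix.diagonal wbar * (Matrix.diagonal wbar * (A * (B * Aᵀ)))) := by
          rw [hP]; simp only [Matrix.mul_assoc]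
      _ = Aᵀ * (D * (A * (B * Aᵀ))) := by
          rw [← Matrix.mul_assoc (Matrix.diagonal wbar) (Matrix.diagonal wbar), hdd]
      _ = Aᵀ := h1 Aᵀ
  -- apply the comparison lemma
  refine lev_le_of_map _ _ i _ ?_ ?_
  · have h1' : (0:ℝ) < 1 + σ * ε := by
      have := mul_nonneg hσ hε0; linarith
    exact mul_pos (div_pos (pow_pos hwbari 2) (pow_pos hwi 2)) (pow_pos h1' 2)
  intro x hx
  set z : Fin n → ℝ := dZ *ᵥ x with hz
  set u : Fin n → ℝ := P *ᵥ z with hu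
  refine ⟨(wbar i / w i) • (x - u), ?_, ?_⟩
  · -- feasibility
    have hTw : (Matrix.diagonal wbar * A)ᵀ = Aᵀ * Matrix.diagonal wbar := by
      rw [Matrix.transpose_mul, Matrix.diagonal_transpose]
    have hTw' : (Matrix.diagonal w * A)ᵀ = Aᵀ * Matrix.diagonal w := by
      rw [Matrix.transpose_mul, Matrix.diagonal_transpose]
    rw [hTw, Matrix.mulVec_smul, Matrix.mulVec_sub]
    have hu' : (Aᵀ * Matrix.diagonal wbar) *ᵥ u = (Aᵀ * dZ) *ᵥ x := by
      rw [hu, hz, Matrix.mulVec_mulVec, Matrix.mulVec_mulVec, hTP]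
    rw [hu']
    have hsub : (Aᵀ * Matrix.diagonal wbar) *ᵥ x - (Aᵀ * dZ) *ᵥ x
        = (Aᵀ * Matrix.diagonal w) *ᵥ x := by
      rw [← Matrix.sub_mulVec, ← Matrix.mul_sub, hdZ, Matrix.diagonal_sub]
      congr 2
      funext j; ring
    rw [hsub, ← hTw', hx]
    funext k
    have hl : (Matrix.diagonal w * A) i k = w i * A i k := by
      rw [Matrix.diagonal_mul]
    have hr : (Matrix.diagonal wbar * A) i k = wbar i * A i k := by
      rw [Matrix.diagonal_mul]
    simp only [Pi.smul_apply, smul_eq_mul, hl, hr]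
    field_simp
  · -- norm bound
    set S : ℝ := ∑ j, (x j) ^ 2 with hS
    set U : ℝ := ∑ j, (u j) ^ 2 with hU
    have hS0 : 0 ≤ S := by positivity
    have hU0 : 0 ≤ U := by positivity
    have hzj : ∀ j, z j = (wbar j - w j) * x j := by
      intro j; rw [hz, hdZ, Matrix.mulVec_diagonal]
    have hz2 : ∑ j, (z j) ^ 2 ≤ ε ^ 2 * S := by
      rw [hS, Finset.mul_sum]
      refine Finset.sum_le_sum fun j _ => ?_
      rw [hzj j, mul_pow]
      have h1 : (wbar j - w j) ^ 2 ≤ ε ^ 2 := by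
        rw [← sq_abs]
        exact pow_le_pow_left₀ (abs_nonneg _) (hεle j) 2
      exact mul_le_mul_of_nonneg_right h1 (sq_nonneg _)
    have hu2 : U ≤ σ ^ 2 * ∑ j, (z j) ^ 2 := by
      have e1 : U = u ⬝ᵥ u := by
        rw [hU]; simp [dotProduct, sq]
      have e2 : u ⬝ᵥ u = z ⬝ᵥ ((Pᵀ * P) *ᵥ z) := by
        rw [hu, Matrix.dotProduct_mulVec, ← Matrix.mulVec_transpose, Matrix.mulVec_mulVec,
          dotProduct_comm]
      rw [e1, e2, hPTP]
      exact hval z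
    have hUb : U ≤ (σ * ε) ^ 2 * S := by
      calc U ≤ σ ^ 2 * ∑ j, (z j) ^ 2 := hu2
        _ ≤ σ ^ 2 * (ε ^ 2 * S) := by
            exact mul_le_mul_of_nonneg_left hz2 (sq_nonneg σ)
        _ = (σ * ε) ^ 2 * S := by ring
    -- Cauchy–Schwarz and triangle inequality
    set r : ℝ := Real.sqrt S with hr
    set s : ℝ := Real.sqrt U with hs
    have hr0 : 0 ≤ r := Real.sqrt_nonneg _
    have hs0 : 0 ≤ s := Real.sqrt_nonneg _
    have hrS : r ^ 2 = S := Real.sq_sqrt hS0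
    have hsU : s ^ 2 = U := Real.sq_sqrt hU0
    set t1 : ℝ := ∑ j, x j * u j with ht1
    have hcs : |t1| ≤ r * s := by
      rw [← Real.sqrt_sq_eq_abs]
      calc Real.sqrt (t1 ^ 2) ≤ Real.sqrt (S * U) := by
            apply Real.sqrt_le_sqrt
            rw [ht1, hS, hU]
            exact Finset.sum_mul_sq_le_sq_mul_sq _ _ _
        _ = r * s := Real.sqrt_mul hS0 U
    have hsr : s ≤ σ * ε * r := by
      have h3 : s ≤ Real.sqrt ((σ * ε) ^ 2 * S) := by
        rw [hs]; exact Real.sqrt_le_sqrt hUb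
      calc s ≤ Real.sqrt ((σ * ε) ^ 2 * S) := h3
        _ = σ * ε * r := by
            rw [Real.sqrt_mul (sq_nonneg _), Real.sqrt_sq (by positivity)]
    clear_value S U r s t1
    have hexp : ∑ j, ((x j - u j)) ^ 2 = S - 2 * t1 + U := by
      have e : ∀ j, (x j - u j) ^ 2 = x j ^ 2 - 2 * (x j * u j) + u j ^ 2 := fun j => by ring
      simp_rw [e]
      rw [Finset.sum_add_distrib, Finset.sum_sub_distrib, ← Finset.mul_sum, ← hS, ← hU, ← ht1]
    have htri : ∑ j, ((x j - u j)) ^ 2 ≤ (1 + σ * ε) ^ 2 * S := by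
      have hn : -t1 ≤ r * s := by
        have := neg_abs_le t1; linarith [hcs]
      calc ∑ j, ((x j - u j)) ^ 2 = S - 2 * t1 + U := hexp
        _ = r ^ 2 - 2 * t1 + s ^ 2 := by rw [hrS, hsU]
        _ ≤ r ^ 2 + 2 * (r * s) + s ^ 2 := by linarith
        _ = (r + s) ^ 2 := by ring
        _ ≤ ((1 + σ * ε) * r) ^ 2 := by
            have h4 : r + s ≤ (1 + σ * ε) * r := by
              have h5 : (1 + σ * ε) * r = r + σ * ε * r := by ring
              linarith [hsr]
            exact pow_le_pow_left₀ (by linarith) h4 2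
        _ = (1 + σ * ε) ^ 2 * S := by rw [mul_pow, hrS]
    calc ∑ j, ((wbar i / w i) • (x - u)) j ^ 2
        = (wbar i / w i) ^ 2 * ∑ j, ((x j - u j)) ^ 2 := by
          rw [Finset.mul_sum]
          refine Finset.sum_congr rfl fun j _ => ?_
          simp [Pi.smul_apply, Pi.sub_apply, smul_eq_mul]; ring
      _ ≤ (wbar i / w i) ^ 2 * ((1 + σ * ε) ^ 2 * S) := by
          exact mul_le_mul_of_nonneg_left htri (sq_nonneg _)
      _ = (wbar i) ^ 2 / (w i) ^ 2 * (1 + σ * ε) ^ 2 * S := by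
          rw [div_pow]; ring
end
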